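/- Let G be a finite group, F a field of characteristic 0, and ρ : G → GL(V) a faithful representation of G on a finite-dimensional F-vector space V. Then the regular representation F[G] is a direct summand of a finite direct sum of tensor powers of V: there exist an integer N ≥ 1, natural numbers n₁,…,n_N, and a finite-dimensional representation W of G over F such that V^{⊗n₁} ⊕ ⋯ ⊕ V^{⊗n_N} ≅ F[G] ⊕ W as representations of G. -/

import Mathlib

open PiTensorProduct

/-! ### Auxiliary lemmas -/

/-- A subalgebra of `X → F` (X finite) that separates points is everything. -/
theorem Subalgebra.eq_top_of_separates' {F X : Type} [Field F] [Fintype X] [DecidableEq X]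
    (A : Subalgebra F (X → F))
    (h : ∀ x y : X, x ≠ y → ∃ f ∈ A, f x ≠ f y) : A = ⊤ := by
  have key : ∀ x : X, (fun z => if z = x then (1 : F) else 0) ∈ A := by
    intro x
    choose f hfA hfne using fun y (hy : y ≠ x) => h x y fun e => hy e.symm
    classical
    set u : X → (X → F) := fun y =>
      if hy : y = x then 1
      else (f y hy x - f y hy y)⁻¹ • (f y hy - (algebraMap F (X → F)) (f y hy y)) with hu
    have huA : ∀ y, u y ∈ A := by
      intro y
      by_cases hy : y = x
      · simp [hu, hy, A.one_mem]
      · simpa [hu, hy] using A.smul_mem (A.sub_mem (hfA y hy) (A.algebraMap_mem _)) _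
    have hux : ∀ y, u y x = 1 := by
      intro y
      by_cases hy : y = x
      · simp [hu, hy]
      · simp only [hu, hy, dif_neg, not_false_iff, Pi.smul_apply, Pi.sub_apply,
          smul_eq_mul]
        rw [show (algebraMap F (X → F)) (f y hy y) x = f y hy y from rfl]
        exact inv_mul_cancel₀ (sub_ne_zero.mpr (hfne y hy))
    have huy : ∀ y (hy : y ≠ x), u y y = 0 := by
      intro y hy
      simp only [hu, hy, dif_neg, not_false_iff, Pi.smul_apply, Pi.sub_apply, smul_eq_mul]
      rw [show (algebraMap F (X → F)) (f y hy y) y = f y hy y from rfl]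
      simp
    have hP : (∏ y ∈ Finset.univ.erase x, u y) ∈ A :=
      A.prod_mem fun y _ => huA y
    have : (∏ y ∈ Finset.univ.erase x, u y) = fun z => if z = x then (1 : F) else 0 := by
      funext z
      rw [Finset.prod_apply]
      by_cases hz : z = x
      · subst hz
        simp only [if_pos rfl]
        exact Finset.prod_eq_one fun y _ => hux y
      · rw [if_neg hz]
        exact Finset.prod_eq_zero (Finset.mem_erase.mpr ⟨hz, Finset.mem_univ z⟩) (huy z hz)
    rwa [this] at hP
  rw [eq_top_iff]
  intro f _
  have : f = ∑ x : X, f x • (fun z => if z = x then (1 : F) else 0) := by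
    funext z
    simp [Finset.sum_apply, mul_ite, Finset.sum_ite_eq]
  rw [this]
  exact Subalgebra.sum_mem _ fun x _ => A.smul_mem (key x) _

section TPow

variable {F G V : Type} [Field F] [Group G] [AddCommGroup V] [Module F V]
variable (ρ : Representation F G V)

/-- The `n`-th tensor power representation. -/
noncomputable def tpowRep (n : ℕ) :
    Representation F G (PiTensorProduct F (fun _ : Fin n => V)) where
  toFun g := PiTensorProduct.map (fun _ => ρ g)
  map_one' := by
    show PiTensorProduct.map (fun _ : Fin n => ρ 1) = 1
    rw [show (fun _ : Fin n => ρ 1) = fun _ : Fin n => (1 : V →ₗ[F] V) from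
      funext fun _ => _root_.map_one ρ]
    exact PiTensorProduct.map_one
  map_mul' g h := by
    show PiTensorProduct.map (fun _ : Fin n => ρ (g * h)) = _
    rw [show (fun _ : Fin n => ρ (g * h)) = fun _ : Fin n => ρ g * ρ h from
      funext fun _ => _root_.map_mul ρ g h]
    exact PiTensorProduct.map_mul _ _

@[simp] theorem tpowRep_apply (n : ℕ) (g : G) :
    tpowRep ρ n g = PiTensorProduct.map (fun _ => ρ g) := rfl

/-- The direct sum of tensor power representations. -/
noncomputable def piTpowRep (N : ℕ) (n : Fin N → ℕ) :
    Representation F G (Π i : Fin N, PiTensorProduct F (fun _ : Fin (n i) => V)) where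
  toFun g := LinearMap.pi fun i => (tpowRep ρ (n i) g) ∘ₗ LinearMap.proj i
  map_one' := by
    refine LinearMap.ext fun x => funext fun i => ?_
    simp
  map_mul' g h := by
    refine LinearMap.ext fun x => funext fun i => ?_
    simp [PiTensorProduct.map_mul, Module.End.mul_apply]

@[simp] theorem piTpowRep_apply (N : ℕ) (n : Fin N → ℕ) (g : G)
    (x : Π i : Fin N, PiTensorProduct F (fun _ : Fin (n i) => V)) :
    piTpowRep ρ N n g x = fun i => PiTensorProduct.map (fun _ => ρ g) (x i) := rfl

variable {D : ℕ} (b : Module.Basis (Fin D) F V)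

/-- Basis tensors. -/
noncomputable def btensor (n : ℕ) (j : Fin n → Fin D) :
    PiTensorProduct F (fun _ : Fin n => V) :=
  tprod F fun t => b (j t)

/-- Coordinate functionals on tensor powers. -/
noncomputable def coordFun (n : ℕ) (k : Fin n → Fin D) :
    (PiTensorProduct F (fun _ : Fin n => V)) →ₗ[F] F :=
  PiTensorProduct.lift
    ((MultilinearMap.mkPiAlgebra F (Fin n) F).compLinearMap fun t => b.coord (k t))

@[simp] theorem coordFun_tprod (n : ℕ) (k : Fin n → Fin D) (f : Fin n → V) :
    coordFun b n k (tprod F f) = ∏ t, b.repr (f t) (k t) := by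
  simp [coordFun, Module.Basis.coord_apply]

theorem span_btensor_eq_top (n : ℕ) :
    Submodule.span F (Set.range fun j : Fin n → Fin D => btensor b n j) = ⊤ := by
  classical
  rw [eq_top_iff, ← PiTensorProduct.span_tprod_eq_top, Submodule.span_le]
  rintro x ⟨f, rfl⟩
  have h1 : (tprod F (s := fun _ : Fin n => V)) f
      = tprod F (fun t => ∑ k : Fin D, b.repr (f t) k • b k) :=
    congrArg _ (funext fun t => (b.sum_repr (f t)).symm)
  rw [h1, MultilinearMap.map_sum]
  refine Submodule.sum_mem _ fun j _ => ?_
  rw [MultilinearMap.map_smul_univ]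
  exact Submodule.smul_mem _ _ (Submodule.subset_span ⟨j, rfl⟩)

include b in
theorem tpow_finite (n : ℕ) :
    Module.Finite F (PiTensorProduct F (fun _ : Fin n => V)) := by
  classical
  exact ⟨⟨Finset.univ.image fun j : Fin n → Fin D => btensor b n j, by
    rw [Finset.coe_image, Finset.coe_univ, Set.image_univ]
    exact span_btensor_eq_top b n⟩⟩

/-- Left regular action on the monoid algebra is multiplication by `single g 1`. -/
theorem ofMulAction_self_eq_mul (g : G) (z : MonoidAlgebra F G) :
    Representation.ofMulAction F G G g z = MonoidAlgebra.single g 1 * z := by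
  induction z using MonoidAlgebra.induction_linear with
  | zero => simp [mul_zero]
  | add f₁ f₂ h₁ h₂ => rw [map_add, h₁, h₂, mul_add]
  | single h r =>
    rw [Representation.ofMulAction_single,
      show MonoidAlgebra.single g 1 * MonoidAlgebra.single h r
        = MonoidAlgebra.single (g * h) (1 * r) from MonoidAlgebra.single_mul_single _ _ _ _,
      one_mul, smul_eq_mul]

end TPow

theorem exists_spanning_coeffs {F G V : Type} [Field F] [Group G] [Finite G]
    [AddCommGroup V] [Module F V] {D : ℕ} (b : Module.Basis (Fin D) F V)
    (ρ : Representation F G V) (hρ : Function.Injective ρ) :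
    ∃ (N : ℕ), 1 ≤ N ∧ ∃ (n : Fin N → ℕ) (jj kk : ∀ i : Fin N, Fin (n i) → Fin D),
      Submodule.span F (Set.range fun i : Fin N =>
        (fun g : G => ∏ t, b.repr (ρ g (b (jj i t))) (kk i t))) = ⊤ := by
  classical
  cases nonempty_fintype G
  set s : Set (G → F) :=
    Set.range (fun p : Fin D × Fin D => fun g : G => b.repr (ρ g (b p.2)) p.1) with hs
  have hadj : Algebra.adjoin F s = ⊤ := by
    apply Subalgebra.eq_top_of_separates'
    intro g h hgh
    have hne : ρ g ≠ ρ h := fun e => hgh (hρ e)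
    have h1 : ∃ j, ρ g (b j) ≠ ρ h (b j) := by
      by_contra hc; push_neg at hc; exact hne (b.ext hc)
    obtain ⟨j, hj⟩ := h1
    have h2 : ∃ k, b.repr (ρ g (b j)) k ≠ b.repr (ρ h (b j)) k := by
      by_contra hc; push_neg at hc
      exact hj (b.repr.injective (Finsupp.ext hc))
    obtain ⟨k, hk⟩ := h2
    exact ⟨_, Algebra.subset_adjoin ⟨(k, j), rfl⟩, hk⟩
  have hspan : Submodule.span F ((Submonoid.closure s : Submonoid (G → F)) : Set (G → F)) = ⊤ := by
    rw [← Algebra.adjoin_eq_span, hadj]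
    rfl
  have hfin : ∀ x : G → F, ∃ t : Finset (G → F),
      ↑t ⊆ ((Submonoid.closure s : Submonoid (G → F)) : Set (G → F)) ∧
      x ∈ Submodule.span F (t : Set (G → F)) := fun x =>
    Submodule.mem_span_finite_of_mem_span (hspan ▸ Submodule.mem_top)
  choose ts hts hxts using hfin
  set T : Finset (G → F) := Finset.univ.biUnion (fun g : G => ts (Pi.basisFun F G g)) with hT
  have hTsub : (T : Set (G → F)) ⊆ ((Submonoid.closure s : Submonoid (G → F)) : Set (G → F)) := by
    intro x hx
    rw [Finset.mem_coe, hT, Finset.mem_biUnion] at hx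
    obtain ⟨g, _, hg⟩ := hx
    exact hts _ hg
  have hTspan : Submodule.span F (T : Set (G → F)) = ⊤ := by
    rw [eq_top_iff, ← (Pi.basisFun F G).span_eq, Submodule.span_le]
    rintro x ⟨g, rfl⟩
    refine Submodule.span_mono ?_ (hxts (Pi.basisFun F G g))
    intro y hy
    exact Finset.mem_coe.mpr (Finset.mem_biUnion.mpr ⟨g, Finset.mem_univ g, hy⟩)
  have hTne : T.Nonempty := by
    by_contra hc
    rw [Finset.not_nonempty_iff_eq_empty] at hc
    rw [hc] at hTspan
    simp only [Finset.coe_empty, Submodule.span_empty] at hTspan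
    exact absurd hTspan.symm bot_ne_top.symm
  have hmem : ∀ x ∈ T, ∃ (m : ℕ) (jj kk : Fin m → Fin D),
      x = fun g : G => ∏ t, b.repr (ρ g (b (jj t))) (kk t) := by
    intro x hx
    obtain ⟨l, hl, hprod⟩ := Submonoid.exists_list_of_mem_closure (hTsub hx)
    have hchoose : ∀ t : Fin l.length, ∃ p : Fin D × Fin D,
        (fun g : G => b.repr (ρ g (b p.2)) p.1) = l.get t := fun t => hl _ (l.get_mem t)
    choose p hp using hchoose
    refine ⟨l.length, fun t => (p t).2, fun t => (p t).1, ?_⟩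
    have h1 : x = (List.ofFn l.get).prod := by rw [List.ofFn_get, hprod]
    rw [h1, List.prod_ofFn]
    funext g
    rw [Finset.prod_apply]
    exact Finset.prod_congr rfl fun t _ => by rw [← hp t]
  choose m jjf kkf hxeq using hmem
  set eT := T.equivFin with heT
  refine ⟨T.card, hTne.card_pos, fun i => m _ (eT.symm i).2,
    fun i => jjf _ (eT.symm i).2, fun i => kkf _ (eT.symm i).2, ?_⟩
  rw [eq_top_iff, ← hTspan, Submodule.span_le]
  intro x hx
  refine Submodule.subset_span ⟨eT ⟨x, hx⟩, ?_⟩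
  calc (fun g : G => ∏ t : Fin (m (eT.symm (eT ⟨x, hx⟩)).1 (eT.symm (eT ⟨x, hx⟩)).2),
          b.repr (ρ g (b (jjf _ (eT.symm (eT ⟨x, hx⟩)).2 t))) (kkf _ (eT.symm (eT ⟨x, hx⟩)).2 t))
      = ((eT.symm (eT ⟨x, hx⟩) : T) : G → F) := (hxeq _ _).symm
    _ = x := by rw [Equiv.symm_apply_apply]

set_option maxHeartbeats 1000000 in
/-- Let `G` be a finite group, `F` a field of characteristic `0`, and
`ρ : G → GL(V)` a faithful representation on a finite-dimensional `F`-vector space `V`.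
Then the regular representation `F[G]` is a direct summand of a finite direct sum of
tensor powers of `V`: there exist `N ≥ 1`, natural numbers `n₁,…,n_N`, and a
finite-dimensional representation `W` (realized as `σ` on `Fin d → F`) together with an
equivariant linear equivalence `V^{⊗n₁} ⊕ ⋯ ⊕ V^{⊗n_N} ≅ F[G] ⊕ W`, where each tensor
power carries the diagonal `G`-action and `F[G]` the left regular action. -/
theorem regular_rep_summand_of_tensor_powers
    {F : Type} [Field F] [CharZero F]
    {G : Type} [Group G] [Finite G]
    {V : Type} [AddCommGroup V] [Module F V] [FiniteDimensional F V]
    (ρ : Representation F G V) (hρ : Function.Injective ρ) :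
    ∃ (N : ℕ), 1 ≤ N ∧
    ∃ (n : Fin N → ℕ) (d : ℕ) (σ : Representation F G (Fin d → F))
      (e : (Π i : Fin N, PiTensorProduct F (fun _ : Fin (n i) => V)) ≃ₗ[F]
            (MonoidAlgebra F G × (Fin d → F))),
      ∀ (g : G) (x : Π i : Fin N, PiTensorProduct F (fun _ : Fin (n i) => V)),
        e (fun i => PiTensorProduct.map (fun _ => ρ g) (x i))
          = (Representation.ofMulAction F G G g (e x).1, σ g (e x).2) := by
  classical
  cases nonempty_fintype G
  set D := Module.finrank F V with hD
  set b : Module.Basis (Fin D) F V := Module.finBasis F V with hb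
  obtain ⟨N, hN, n, jj, kk, hspan⟩ := exists_spanning_coeffs b ρ hρ
  refine ⟨N, hN, n, ?_⟩
  -- the big module
  letI : Module (MonoidAlgebra F G) (Π i : Fin N, PiTensorProduct F (fun _ : Fin (n i) => V)) :=
    Module.compHom _ ((piTpowRep ρ N n).asAlgebraHom.toRingHom)
  have hsmul : ∀ (a : MonoidAlgebra F G)
      (x : Π i : Fin N, PiTensorProduct F (fun _ : Fin (n i) => V)),
      a • x = (piTpowRep ρ N n).asAlgebraHom a x := fun _ _ => rfl
  haveI : IsScalarTower F (MonoidAlgebra F G)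
      (Π i : Fin N, PiTensorProduct F (fun _ : Fin (n i) => V)) := by
    refine ⟨fun r a x => ?_⟩
    have hms : (piTpowRep ρ N n).asAlgebraHom (r • a)
        = r • (piTpowRep ρ N n).asAlgebraHom a := by
      rw [← AlgHom.toLinearMap_apply, ← AlgHom.toLinearMap_apply, map_smul]
    rw [hsmul, hsmul, hms]
    exact LinearMap.smul_apply _ _ _
  haveI : SMulCommClass F (MonoidAlgebra F G)
      (Π i : Fin N, PiTensorProduct F (fun _ : Fin (n i) => V)) := by
    refine ⟨fun r a x => ?_⟩
    rw [hsmul, hsmul]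
    exact (((piTpowRep ρ N n).asAlgebraHom a).map_smul r x).symm
  haveI : NeZero ((Fintype.card G : F)) := ⟨Nat.cast_ne_zero.mpr Fintype.card_ne_zero⟩
  -- the equivariant embedding of the regular representation
  set w : Π i : Fin N, PiTensorProduct F (fun _ : Fin (n i) => V) :=
    fun i => btensor b (n i) (jj i) with hw
  set Φ : MonoidAlgebra F G →ₗ[MonoidAlgebra F G]
      (Π i : Fin N, PiTensorProduct F (fun _ : Fin (n i) => V)) :=
    { toFun := fun a => a • w
      map_add' := fun a c => add_smul a c w
      map_smul' := fun r a => mul_smul r a w } with hΦ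
  have hcomp : ∀ (a : MonoidAlgebra F G) (i : Fin N),
      (a • w) i = ∑ g : G, a.coeff g • PiTensorProduct.map (fun _ => ρ g) (w i) := by
    intro a i
    induction a using MonoidAlgebra.induction_linear with
    | zero => simp
    | add f₁ f₂ h₁ h₂ =>
      rw [add_smul, Pi.add_apply, h₁, h₂, ← Finset.sum_add_distrib]
      exact Finset.sum_congr rfl fun g _ => by rw [MonoidAlgebra.coeff_add, Finsupp.add_apply, add_smul]
    | single g r =>
      show ((piTpowRep ρ N n).asAlgebraHom (MonoidAlgebra.single g r) w) i = _
      rw [Representation.asAlgebraHom_single]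
      simp [MonoidAlgebra.coeff_single, Finsupp.single_apply, ite_smul, Finset.sum_ite_eq, piTpowRep_apply]
  have hinj : Function.Injective Φ := by
    have hker : ∀ a : MonoidAlgebra F G, Φ a = 0 → a = 0 := by
      intro a ha
      set L : (G → F) →ₗ[F] F :=
        { toFun := fun f => ∑ g : G, a.coeff g * f g
          map_add' := by
            intro f₁ f₂
            rw [← Finset.sum_add_distrib]
            exact Finset.sum_congr rfl fun g _ => by rw [Pi.add_apply, mul_add]
          map_smul' := by
            intro r f
            show ∑ g : G, a.coeff g * (r • f) g = r • ∑ g : G, a.coeff g * f g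
            rw [smul_eq_mul, Finset.mul_sum]
            exact Finset.sum_congr rfl fun g _ => by
              rw [Pi.smul_apply, smul_eq_mul]; ring } with hL
      have hLi : ∀ i : Fin N,
          (fun g : G => ∏ t, b.repr (ρ g (b (jj i t))) (kk i t)) ∈ LinearMap.ker L := by
        intro i
        have h1 : coordFun b (n i) (kk i) ((a • w) i)
            = L (fun g : G => ∏ t, b.repr (ρ g (b (jj i t))) (kk i t)) := by
          rw [hcomp, map_sum]
          refine Finset.sum_congr rfl fun g _ => ?_
          rw [map_smul, smul_eq_mul]
          congr 1
          show coordFun b (n i) (kk i)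
            (PiTensorProduct.map (fun _ => ρ g) (btensor b (n i) (jj i))) = _
          rw [btensor, PiTensorProduct.map_tprod, coordFun_tprod]
        have h2 : (a • w) = 0 := ha
        rw [LinearMap.mem_ker, ← h1, h2]
        simp
      have hLtop : LinearMap.ker L = ⊤ := by
        rw [eq_top_iff, ← hspan, Submodule.span_le]
        rintro f ⟨i, rfl⟩
        exact hLi i
      ext g₀
      have h3 : L (fun g => if g = g₀ then 1 else 0) = 0 := by
        rw [← LinearMap.mem_ker, hLtop]; trivial
      have h4 : ∑ g : G, a.coeff g * (if g = g₀ then (1 : F) else 0) = 0 := h3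
      have h5 : a.coeff g₀ = 0 := by
        simpa [mul_ite, mul_one, mul_zero, Finset.sum_ite_eq'] using h4
      simpa using h5
    intro a c h
    have := hker (a - c) (by rw [map_sub, h, sub_self])
    exact sub_eq_zero.mp this
  obtain ⟨q, hq⟩ := MonoidAlgebra.Submodule.exists_isCompl (LinearMap.range Φ)
  -- finite dimensionality
  haveI : ∀ i : Fin N, Module.Finite F (PiTensorProduct F (fun _ : Fin (n i) => V)) :=
    fun i => tpow_finite b (n i)
  haveI : FiniteDimensional F (Π i : Fin N, PiTensorProduct F (fun _ : Fin (n i) => V)) :=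
    inferInstance
  haveI : FiniteDimensional F ↥q :=
    FiniteDimensional.of_injective ((q.subtype).restrictScalars F) Subtype.val_injective
  set d := Module.finrank F ↥q with hd
  set bq : Module.Basis (Fin d) F ↥q := Module.finBasis F ↥q with hbq
  -- the action on the complement
  have qsmul : ∀ (g : G) (y : ↥q),
      (MonoidAlgebra.single g (1 : F)) •
        (y : Π i : Fin N, PiTensorProduct F (fun _ : Fin (n i) => V)) ∈ q :=
    fun g y => q.smul_mem _ y.2
  set actQ : Representation F G ↥q :=
    { toFun := fun g =>
        { toFun := fun y => ⟨(MonoidAlgebra.single g (1 : F)) • (y :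
              Π i : Fin N, PiTensorProduct F (fun _ : Fin (n i) => V)), qsmul g y⟩
          map_add' := fun y z => Subtype.ext (by
            show (MonoidAlgebra.single g (1:F)) •
                ((y : Π i : Fin N, PiTensorProduct F (fun _ : Fin (n i) => V))
                  + (z : Π i : Fin N, PiTensorProduct F (fun _ : Fin (n i) => V)))
              = (MonoidAlgebra.single g (1:F)) •
                  (y : Π i : Fin N, PiTensorProduct F (fun _ : Fin (n i) => V))
                + (MonoidAlgebra.single g (1:F)) •
                  (z : Π i : Fin N, PiTensorProduct F (fun _ : Fin (n i) => V))
            rw [smul_add])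
          map_smul' := fun r y => Subtype.ext (by
            show (MonoidAlgebra.single g (1:F)) •
                (r • (y : Π i : Fin N, PiTensorProduct F (fun _ : Fin (n i) => V)))
              = r • ((MonoidAlgebra.single g (1:F)) •
                  (y : Π i : Fin N, PiTensorProduct F (fun _ : Fin (n i) => V)))
            exact (smul_comm r (MonoidAlgebra.single g (1:F))
              (y : Π i : Fin N, PiTensorProduct F (fun _ : Fin (n i) => V))).symm) }
      map_one' := LinearMap.ext fun y => Subtype.ext (by
        show (MonoidAlgebra.single (1:G) (1:F)) •
            (y : Π i : Fin N, PiTensorProduct F (fun _ : Fin (n i) => V))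
          = (y : Π i : Fin N, PiTensorProduct F (fun _ : Fin (n i) => V))
        rw [← MonoidAlgebra.one_def, one_smul])
      map_mul' := fun g h => LinearMap.ext fun y => Subtype.ext (by
        show (MonoidAlgebra.single (g * h) (1:F)) •
            (y : Π i : Fin N, PiTensorProduct F (fun _ : Fin (n i) => V))
          = (MonoidAlgebra.single g (1:F)) • (MonoidAlgebra.single h (1:F)) •
            (y : Π i : Fin N, PiTensorProduct F (fun _ : Fin (n i) => V))
        rw [← mul_smul, MonoidAlgebra.single_mul_single, one_mul]) } with hactQ
  set σ : Representation F G (Fin d → F) :=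
    { toFun := fun g => bq.equivFun.toLinearMap ∘ₗ (actQ g) ∘ₗ bq.equivFun.symm.toLinearMap
      map_one' := by
        refine LinearMap.ext fun v => ?_
        simp only [_root_.map_one, LinearMap.comp_apply, Module.End.one_apply,
          LinearEquiv.coe_coe, LinearEquiv.apply_symm_apply]
      map_mul' := fun g h => by
        refine LinearMap.ext fun v => ?_
        simp only [_root_.map_mul, LinearMap.comp_apply, Module.End.mul_apply,
          LinearEquiv.coe_coe, LinearEquiv.symm_apply_apply] } with hσ
  -- the equivalence
  set e₁ : (Π i : Fin N, PiTensorProduct F (fun _ : Fin (n i) => V))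
      ≃ₗ[MonoidAlgebra F G] (↥(LinearMap.range Φ) × ↥q) :=
    (Submodule.prodEquivOfIsCompl _ q hq).symm with he₁
  set e₂ : ↥(LinearMap.range Φ) ≃ₗ[MonoidAlgebra F G] MonoidAlgebra F G :=
    (LinearEquiv.ofInjective Φ hinj).symm with he₂
  set e : (Π i : Fin N, PiTensorProduct F (fun _ : Fin (n i) => V))
      ≃ₗ[F] (MonoidAlgebra F G × (Fin d → F)) :=
    (e₁.restrictScalars F).trans ((e₂.restrictScalars F).prodCongr bq.equivFun) with he
  refine ⟨d, σ, e, ?_⟩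
  intro g x
  have hx : (fun i => PiTensorProduct.map (fun _ => ρ g) (x i))
      = (MonoidAlgebra.single g (1 : F)) • x := by
    rw [hsmul, Representation.asAlgebraHom_single_one]
    rfl
  rw [hx]
  have happ : ∀ z : Π i : Fin N, PiTensorProduct F (fun _ : Fin (n i) => V),
      e z = (e₂ (e₁ z).1, bq.equivFun (e₁ z).2) := fun z => rfl
  rw [happ, happ]
  have h1 : e₁ ((MonoidAlgebra.single g (1:F)) • x)
      = (MonoidAlgebra.single g (1:F)) • (e₁ x) := map_smul e₁ _ _
  rw [h1]
  refine Prod.ext ?_ ?_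
  · show e₂ ((MonoidAlgebra.single g (1:F)) • (e₁ x).1)
      = Representation.ofMulAction F G G g (e₂ (e₁ x).1)
    rw [map_smul e₂, ofMulAction_self_eq_mul, smul_eq_mul]
  · show bq.equivFun ((MonoidAlgebra.single g (1:F)) • (e₁ x).2)
      = σ g (bq.equivFun (e₁ x).2)
    show _ = bq.equivFun (actQ g (bq.equivFun.symm (bq.equivFun (e₁ x).2)))
    rw [LinearEquiv.symm_apply_apply]
    exact congrArg _ (Subtype.ext rfl)
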